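/- Let ξ ∈ ℂ with |ξ|² = q ≥ 2. For the function field explicit-formula counting: if for each n ≥ 1 one sets N_n = (1-ξⁿ)(1-ξ̄ⁿ) and defines a_d by the relation N_n = Σ_{d | n} d·a_d for all n ≥ 1, then the a_d (given by Möbius inversion: d·a_d = Σ_{e|d} μ(d/e) N_e) are nonnegative. -/

import Mathlib

/-- Integer sequence `ξ^n + ξ̄^n` for `ξ` with trace `s` and norm `q`. -/
def frobTrace (s q : ℤ) : ℕ → ℤ
  | 0 => 2
  | 1 => s
  | n + 2 => s * frobTrace s q (n + 1) - q * frobTrace s q n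

lemma frobTrace_complex (ξ : ℂ) (s q : ℤ)
    (h1 : ξ + (starRingEnd ℂ) ξ = (s : ℂ)) (h2 : ξ * (starRingEnd ℂ) ξ = (q : ℂ)) :
    ∀ n : ℕ, ((frobTrace s q n : ℤ) : ℂ) = ξ ^ n + ((starRingEnd ℂ) ξ) ^ n := by
  intro n
  induction n using Nat.twoStepInduction with
  | zero => norm_num [frobTrace]
  | one => simpa [frobTrace] using h1.symm
  | more n ih1 ih2 =>
    show ((s * frobTrace s q (n + 1) - q * frobTrace s q n : ℤ) : ℂ) = _
    push_cast
    rw [ih1, ih2, ← h1, ← h2]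
    ring

lemma geom_sum_le {x : ℝ} (hx : 2 ≤ x) : ∀ m : ℕ, ∑ e ∈ Finset.Icc 1 m, x ^ e ≤ 2 * x ^ m := by
  intro m
  induction m with
  | zero => simp
  | succ m ih =>
    rw [Finset.sum_Icc_succ_top (by omega)]
    have h0 : (0:ℝ) ≤ x := by linarith
    have hp : (0:ℝ) ≤ x ^ m := pow_nonneg h0 m
    have : x ^ (m + 1) = x ^ m * x := pow_succ x m
    nlinarith

set_option maxHeartbeats 4000000 in
/-- Let `ξ ∈ ℂ` with `|ξ|² = q ≥ 2` (with `q` a prime power and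
`ξ + ξ̄ ∈ ℤ`, as for the Frobenius of an elliptic curve over `F_q`).  If for each
`n ≥ 1` one sets `N_n = (1-ξⁿ)(1-ξ̄ⁿ)` and defines `a_d` by `N_n = Σ_{d∣n} d·a_d`,
i.e. by Möbius inversion `d·a_d = Σ_{e∣d} μ(d/e) N_e`, then each `a_d` is
nonnegative. -/
theorem closed_point_count_nonneg (p r : ℕ) (hp : p.Prime) (hr : 1 ≤ r)
    (q : ℕ) (hq : q = p ^ r) (hq2 : 2 ≤ q)
    (ξ : ℂ) (habs : ‖ξ‖ ^ 2 = q)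
    (s : ℤ) (htrace : ξ + (starRingEnd ℂ) ξ = (s : ℂ))
    (N : ℕ → ℝ)
    (hN : ∀ n : ℕ, 1 ≤ n → (N n : ℂ) = (1 - ξ ^ n) * (1 - ((starRingEnd ℂ) ξ) ^ n)) :
    ∀ d : ℕ, 1 ≤ d →
      0 ≤ (∑ e ∈ d.divisors, ((ArithmeticFunction.moebius (d / e) : ℤ) : ℝ) * N e) / d := by
  have hnq : Complex.normSq ξ = (q : ℝ) := by rw [← Complex.sq_norm, habs]
  have hconj : ξ * (starRingEnd ℂ) ξ = ((q : ℤ) : ℂ) := by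
    rw [Complex.mul_conj, hnq]; push_cast; ring
  have hT := frobTrace_complex ξ s (q : ℤ) htrace hconj
  -- N in terms of the trace sequence
  have hNT : ∀ e : ℕ, e ≠ 0 → N e = (q : ℝ) ^ e + 1 - ((frobTrace s (q : ℤ) e : ℤ) : ℝ) := by
    intro e he
    have h1 := hN e (by omega)
    have hmul : ξ ^ e * ((starRingEnd ℂ) ξ) ^ e = (((q : ℤ) : ℂ)) ^ e := by
      rw [← mul_pow, hconj]
    have : ((N e : ℝ) : ℂ) = (((q : ℝ) ^ e + 1 - ((frobTrace s (q : ℤ) e : ℤ) : ℝ) : ℝ) : ℂ) := by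
      rw [h1]
      push_cast
      rw [hT e]
      push_cast at hmul
      linear_combination hmul
    exact_mod_cast this
  -- the square bound on the trace sequence
  have hT2 : ∀ e : ℕ, ((frobTrace s (q : ℤ) e : ℤ) : ℝ) ^ 2 ≤ 4 * (q : ℝ) ^ e := by
    intro e
    have h1 : ((frobTrace s (q : ℤ) e : ℤ) : ℂ) = ((2 * (ξ ^ e).re : ℝ) : ℂ) := by
      rw [hT e, ← map_pow, Complex.add_conj]
    have h2 : ((frobTrace s (q : ℤ) e : ℤ) : ℝ) = 2 * (ξ ^ e).re := by exact_mod_cast h1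
    have h3 : Complex.normSq (ξ ^ e) = (q : ℝ) ^ e := by
      rw [← Complex.sq_norm, norm_pow, ← pow_mul, mul_comm e 2, pow_mul, habs]
    have h4 : (ξ ^ e).re ^ 2 ≤ Complex.normSq (ξ ^ e) := by
      rw [Complex.normSq_apply]; nlinarith [sq_nonneg (ξ ^ e).im]
    rw [h2]; nlinarith
  have hs2 : s ^ 2 ≤ 4 * (q : ℤ) := by
    have h := hT2 1
    have h1 : frobTrace s (q : ℤ) 1 = s := rfl
    rw [h1, pow_one] at h
    exact_mod_cast h
  intro d hd
  have hd0 : d ≠ 0 := by omega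
  -- reduce to an integer statement
  suffices hZ : 0 ≤ ∑ e ∈ d.divisors,
      (ArithmeticFunction.moebius (d / e) : ℤ) * ((q : ℤ) ^ e + 1 - frobTrace s (q : ℤ) e) by
    have hsum : (∑ e ∈ d.divisors, ((ArithmeticFunction.moebius (d / e) : ℤ) : ℝ) * N e)
        = ((∑ e ∈ d.divisors,
            (ArithmeticFunction.moebius (d / e) : ℤ) * ((q : ℤ) ^ e + 1 - frobTrace s (q : ℤ) e) : ℤ) : ℝ) := by
      push_cast
      refine Finset.sum_congr rfl fun e he => ?_
      rw [hNT e (Nat.pos_of_mem_divisors he).ne']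
      try push_cast
      try ring
    rw [hsum]
    apply div_nonneg _ (Nat.cast_nonneg d)
    exact_mod_cast hZ
  have hq2Z : (2:ℤ) ≤ (q:ℤ) := by exact_mod_cast hq2
  rcases eq_or_lt_of_le hd with hd1 | hd2
  · -- d = 1
    subst hd1
    have h1 : frobTrace s (q : ℤ) 1 = s := rfl
    simp only [Nat.divisors_one, Finset.sum_singleton, show (1:ℕ)/1 = 1 from rfl,
      ArithmeticFunction.moebius_apply_one, h1, pow_one, one_mul]
    nlinarith [sq_nonneg (s - 2)]
  · by_cases hbig : 100 ≤ q ^ d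
    · -- analytic case
      have hqR : (2:ℝ) ≤ (q:ℝ) := by exact_mod_cast hq2
      set u := Real.sqrt q with hu
      have hu0 : 0 ≤ u := Real.sqrt_nonneg _
      have huq : u ^ 2 = (q:ℝ) := Real.sq_sqrt (by positivity)
      have hu1 : (1:ℝ) ≤ u := by nlinarith
      have huleq : u ≤ (q:ℝ) := by nlinarith
      set F : ℕ → ℝ := fun e => ((ArithmeticFunction.moebius (d / e) : ℤ) : ℝ) *
        ((q:ℝ) ^ e + 1 - ((frobTrace s (q:ℤ) e : ℤ) : ℝ)) with hF
      have hT2' : ∀ e : ℕ, |((frobTrace s (q:ℤ) e : ℤ) : ℝ)| ≤ 2 * u ^ e := by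
        intro e
        have h4 : (2 * u ^ e) ^ 2 = 4 * (q:ℝ) ^ e := by
          rw [mul_pow, ← pow_mul, mul_comm e 2, pow_mul, huq]; ring
        calc |((frobTrace s (q:ℤ) e : ℤ) : ℝ)|
            = Real.sqrt (((frobTrace s (q:ℤ) e : ℤ) : ℝ) ^ 2) := (Real.sqrt_sq_eq_abs _).symm
          _ ≤ Real.sqrt ((2 * u ^ e) ^ 2) := Real.sqrt_le_sqrt (by rw [h4]; exact hT2 e)
          _ = 2 * u ^ e := Real.sqrt_sq (by positivity)
      have hud : (10:ℝ) ≤ u ^ d := by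
        have h1 : (u ^ d) ^ 2 = (q:ℝ) ^ d := by rw [← pow_mul, mul_comm d 2, pow_mul, huq]
        have h2 : (100:ℝ) ≤ (q:ℝ) ^ d := by exact_mod_cast hbig
        nlinarith [pow_nonneg hu0 d]
      suffices hR : 0 ≤ ∑ e ∈ d.divisors, F e by
        have hcast : ((∑ e ∈ d.divisors, (ArithmeticFunction.moebius (d / e) : ℤ) *
            ((q : ℤ) ^ e + 1 - frobTrace s (q : ℤ) e) : ℤ) : ℝ) = ∑ e ∈ d.divisors, F e := by
          push_cast [hF]
          exact Finset.sum_congr rfl fun x _ => by ring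
        have : (0:ℝ) ≤ ((∑ e ∈ d.divisors, (ArithmeticFunction.moebius (d / e) : ℤ) *
            ((q : ℤ) ^ e + 1 - frobTrace s (q : ℤ) e) : ℤ) : ℝ) := by rw [hcast]; exact hR
        exact_mod_cast this
      have hmem : d ∈ d.divisors := Nat.mem_divisors_self d hd0
      rw [← Finset.add_sum_erase _ F hmem]
      have hFd : F d = (q:ℝ) ^ d + 1 - ((frobTrace s (q:ℤ) d : ℤ) : ℝ) := by
        simp only [hF]
        rw [Nat.div_self (by omega : 0 < d), ArithmeticFunction.moebius_apply_one]
        norm_num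
      have hsub : d.divisors.erase d ⊆ Finset.Icc 1 (d / 2) := by
        intro e he
        have he' := Finset.mem_of_mem_erase he
        have hne : e ≠ d := (Finset.mem_erase.mp he).1
        have he1 : 1 ≤ e := Nat.pos_of_mem_divisors he'
        obtain ⟨k, hk⟩ := (Nat.mem_divisors.mp he').1
        have hk1 : k ≠ 1 := by rintro rfl; omega
        have hk0 : k ≠ 0 := by rintro rfl; omega
        have h2k : 2 ≤ k := by omega
        have h2e : e * 2 ≤ e * k := Nat.mul_le_mul_left e h2k
        rw [← hk] at h2e
        simp only [Finset.mem_Icc]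
        omega
      have hbnd : ∀ e ∈ d.divisors.erase d, (-4) * (q:ℝ) ^ e ≤ F e := by
        intro e he
        have he' := Finset.mem_of_mem_erase he
        have he1 : 1 ≤ e := Nat.pos_of_mem_divisors he'
        have hq1e : (1:ℝ) ≤ (q:ℝ) ^ e := one_le_pow₀ (by linarith)
        have hue : u ^ e ≤ (q:ℝ) ^ e := pow_le_pow_left₀ hu0 huleq e
        have hmu : |((ArithmeticFunction.moebius (d / e) : ℤ) : ℝ)| ≤ 1 := by
          rw [← Int.cast_abs]
          exact_mod_cast ArithmeticFunction.abs_moebius_le_one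
        have hTe := abs_le.mp (hT2' e)
        have h1 : |(q:ℝ) ^ e + 1 - ((frobTrace s (q:ℤ) e : ℤ) : ℝ)| ≤ (q:ℝ) ^ e + 1 + 2 * u ^ e := by
          rw [abs_le]
          constructor <;> nlinarith [hTe.1, hTe.2]
        have habsF : |F e| ≤ 4 * (q:ℝ) ^ e := by
          simp only [hF]
          rw [abs_mul]
          calc |((ArithmeticFunction.moebius (d / e) : ℤ) : ℝ)| *
              |(q:ℝ) ^ e + 1 - ((frobTrace s (q:ℤ) e : ℤ) : ℝ)|
              ≤ 1 * ((q:ℝ) ^ e + 1 + 2 * u ^ e) :=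
                mul_le_mul hmu h1 (abs_nonneg _) zero_le_one
            _ ≤ 4 * (q:ℝ) ^ e := by nlinarith
        nlinarith [neg_abs_le (F e)]
      have e1 : ∑ e ∈ d.divisors.erase d, ((-4) * (q:ℝ) ^ e) ≤ ∑ e ∈ d.divisors.erase d, F e :=
        Finset.sum_le_sum hbnd
      rw [← Finset.mul_sum] at e1
      have hsum3 : ∑ e ∈ d.divisors.erase d, (q:ℝ) ^ e ≤ ∑ e ∈ Finset.Icc 1 (d / 2), (q:ℝ) ^ e :=
        Finset.sum_le_sum_of_subset_of_nonneg hsub (fun i _ _ => by positivity)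
      have hsum4 := geom_sum_le hqR (d / 2)
      have hhalf : (q:ℝ) ^ (d / 2) ≤ u ^ d := by
        have h1 : (q:ℝ) ^ (d / 2) = u ^ (2 * (d / 2)) := by rw [pow_mul, huq]
        rw [h1]
        exact pow_le_pow_right₀ hu1 (by omega)
      have hqd : (q:ℝ) ^ d = (u ^ d) ^ 2 := by rw [← pow_mul, mul_comm d 2, pow_mul, huq]
      have hTd := abs_le.mp (hT2' d)
      have h10 : 10 * u ^ d ≤ (u ^ d) ^ 2 := by nlinarith [pow_nonneg hu0 d]
      rw [hFd]
      linarith [hTd.2, e1, hsum3, hsum4, hhalf, h10, hqd.ge, hqd.le]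
    · -- small cases
      have hμ1 : ArithmeticFunction.moebius 1 = 1 := ArithmeticFunction.moebius_apply_one
      have hμ2 : ArithmeticFunction.moebius 2 = -1 :=
        ArithmeticFunction.moebius_apply_prime (by norm_num)
      have hμ3 : ArithmeticFunction.moebius 3 = -1 :=
        ArithmeticFunction.moebius_apply_prime (by norm_num)
      have hμ4 : ArithmeticFunction.moebius 4 = 0 :=
        ArithmeticFunction.moebius_eq_zero_of_not_squarefree (by decide)
      have hμ5 : ArithmeticFunction.moebius 5 = -1 :=
        ArithmeticFunction.moebius_apply_prime (by norm_num)
      have hμ6 : ArithmeticFunction.moebius 6 = 1 := by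
        rw [show (6:ℕ) = 2 * 3 by norm_num,
          ArithmeticFunction.isMultiplicative_moebius.map_mul_of_coprime (by norm_num), hμ2, hμ3]
        norm_num
      have hqd99 : q ^ d ≤ 99 := by omega
      have hd6 : d ≤ 6 := by
        by_contra h
        have h7 : (128:ℕ) ≤ 2 ^ d := by
          calc (128:ℕ) = 2 ^ 7 := by norm_num
          _ ≤ 2 ^ d := Nat.pow_le_pow_right (by norm_num) (by omega)
        have h8 : (2:ℕ) ^ d ≤ q ^ d := Nat.pow_le_pow_left hq2 d
        omega
      have hq9 : q ≤ 9 := by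
        by_contra h
        have h1 : (100:ℕ) ≤ q ^ 2 := by
          calc (100:ℕ) = 10 ^ 2 := by norm_num
          _ ≤ q ^ 2 := Nat.pow_le_pow_left (by omega) 2
        have h2 : q ^ 2 ≤ q ^ d := Nat.pow_le_pow_right (by omega) (by omega)
        omega
      have hq9Z : (q:ℤ) ≤ 9 := by exact_mod_cast hq9
      have hs36 : s ^ 2 ≤ 36 := by linarith
      have hsl : -6 ≤ s := by nlinarith [sq_nonneg (s + 7)]
      have hsr : s ≤ 6 := by nlinarith [sq_nonneg (s - 7)]
      clear hT hNT hT2 hN htrace habs hconj hnq hbig hq hp hr hq9Z hs36 hd hd0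
      revert hs2
      interval_cases d <;> interval_cases q <;>
        first
        | (intro hs2
           norm_num at hqd99
           done)
        | (norm_num [show Nat.divisors 2 = {1, 2} from by decide,
            show Nat.divisors 3 = {1, 3} from by decide,
            show Nat.divisors 4 = {1, 2, 4} from by decide,
            show Nat.divisors 5 = {1, 5} from by decide,
            show Nat.divisors 6 = {1, 2, 3, 6} from by decide,
            Finset.sum_insert, Finset.mem_insert, Finset.mem_singleton, Finset.sum_singleton,
            hμ1, hμ2, hμ3, hμ4, hμ5, hμ6, frobTrace]
           <;> interval_cases s <;> norm_num)
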